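/- arXiv:2505.16082 — 2 statements merged into one kernel-verified Lean document; each statement's English description precedes it below -/
import Mathlib

section
/- Let $\mathcal{T}$ be a finite set, $h$ a probability mass function on $\mathcal{T}$, and for each $t \in \mathcal{T}$ let $f(\cdot\mid t)$ and $g(\cdot\mid t)$ be probability measures on $\mathbb{R}^d$. Define the kernel $K((y,t),(y',t')) = K_y(y,y')\,\mathbf{1}[t=t']$, where $K_y$ is a positive definite kernel with all the relevant cross-expectations finite. Then the squared maximum mean discrepancy between the joint distributions $f(y,t)=f(y\mid t)h(t)$ and $g(y,t)=g(y\mid t)h(t)$ decomposes as $\mathrm{MMD}_K^2(f,g) = \sum_{t\in\mathcal{T}} h(t)^2\, \mathrm{MMD}_{K_y}^2(f(\cdot\mid t), g(\cdot\mid t))$. -/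
/-! Each joint law is a finite sum of the push-forwards of `f(·|t)` (resp. `g(·|t)`) along
`y ↦ (y, t)`, weighted by `h t`, so the product of two joint laws is a double sum over pairs
`(s, t)` weighted by `h s * h t`. The indicator `𝟙[t = t']` kills every off-diagonal term, and a
diagonal term contributes `h t ^ 2` times the corresponding cross-expectation of `Ky`; this holds
for each of the three terms of `MMD²` separately. -/

open MeasureTheory NNReal

/-- Squared maximum mean discrepancy between two measures with respect to a kernel `K`. -/
noncomputable def MMD2 {α : Type*} [MeasurableSpace α] (K : α → α → ℝ) (μ ν : Measure α) : ℝ :=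
  (∫ p, K p.1 p.2 ∂(μ.prod μ)) - 2 * (∫ p, K p.1 p.2 ∂(μ.prod ν))
    + (∫ p, K p.1 p.2 ∂(ν.prod ν))

/-- A symmetric positive definite kernel. -/
def IsPosDefKernel {α : Type*} (K : α → α → ℝ) : Prop :=
  (∀ x y, K x y = K y x) ∧
    ∀ (n : ℕ) (x : Fin n → α) (c : Fin n → ℝ),
      0 ≤ ∑ j, ∑ k, c j * c k * K (x j) (x k)

theorem MeasureTheory.Measure.prod_finsetSum {X Y ι κ : Type*} [MeasurableSpace X]
    [MeasurableSpace Y] [Fintype ι] [Fintype κ] (μ : ι → Measure X) (ν : κ → Measure Y)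
    [∀ j, SFinite (ν j)] :
    (∑ i, μ i).prod (∑ j, ν j) = ∑ i, ∑ j, (μ i).prod (ν j) := by
  simp_rw [← Measure.sum_fintype, Measure.prod_sum, Measure.sum_fintype, Fintype.sum_prod_type]

section ProdMk

variable {X T : Type*} [MeasurableSpace X] [MeasurableSpace T] {μ ν : Measure X}
  [SFinite μ] [SFinite ν]

theorem map_prodMk_prod_map_prodMk (s t : T) :
    (μ.map (·, s)).prod (ν.map (·, t)) = (μ.prod ν).map (Prod.map (·, s) (·, t)) :=
  Measure.map_prod_map μ ν measurable_prodMk_right measurable_prodMk_right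

variable [MeasurableSingletonClass T] {E : Type*} [NormedAddCommGroup E]

theorem integrable_map_prodMk_prod_map_prodMk_iff {F : (X × T) × (X × T) → E} {s t : T} :
    Integrable F ((μ.map (·, s)).prod (ν.map (·, t))) ↔
      Integrable (fun p => F ((p.1, s), (p.2, t))) (μ.prod ν) := by
  rw [map_prodMk_prod_map_prodMk, ((measurableEmbedding_prod_mk_right s).prodMap
    (measurableEmbedding_prod_mk_right t)).integrable_map_iff]
  rfl

theorem integral_map_prodMk_prod_map_prodMk [NormedSpace ℝ E] (F : (X × T) × (X × T) → E)
    (s t : T) :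
    ∫ p, F p ∂((μ.map (·, s)).prod (ν.map (·, t))) = ∫ p, F ((p.1, s), (p.2, t)) ∂(μ.prod ν) := by
  rw [map_prodMk_prod_map_prodMk, ((measurableEmbedding_prod_mk_right s).prodMap
    (measurableEmbedding_prod_mk_right t)).integral_map]
  rfl

end ProdMk

section FactorizedKernel

variable {X T : Type*} [MeasurableSpace X] [MeasurableSpace T] [MeasurableSingletonClass T]
  [DecidableEq T]

def factorizedKernel (Ky : X → X → ℝ) (p q : X × T) : ℝ :=
  Ky p.1 q.1 * if p.2 = q.2 then 1 else 0

variable {Ky : X → X → ℝ}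

-- Off the diagonal the integrand vanishes, so integrability of `Ky` is only needed when `s = t`.
theorem integrable_factorizedKernel_map_prodMk {μ ν : Measure X} [SFinite μ] [SFinite ν]
    {s t : T} (hint : s = t → Integrable (fun p => Ky p.1 p.2) (μ.prod ν)) :
    Integrable (fun p => factorizedKernel Ky p.1 p.2) ((μ.map (·, s)).prod (ν.map (·, t))) := by
  rw [integrable_map_prodMk_prod_map_prodMk_iff]
  by_cases hst : s = t
  · simpa [factorizedKernel, hst] using hint hst
  · simp [factorizedKernel, hst]

theorem integral_factorizedKernel_map_prodMk (μ ν : Measure X) [SFinite μ] [SFinite ν]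
    (s t : T) :
    ∫ p, factorizedKernel Ky p.1 p.2 ∂((μ.map (·, s)).prod (ν.map (·, t))) =
      if s = t then ∫ p, Ky p.1 p.2 ∂(μ.prod ν) else 0 := by
  rw [integral_map_prodMk_prod_map_prodMk]
  split_ifs with hst <;> simp [factorizedKernel, hst]

variable [Fintype T]

theorem integral_factorizedKernel_joint (h : T → ℝ≥0) (μ ν : T → Measure X)
    [∀ t, SFinite (μ t)] [∀ t, SFinite (ν t)]
    (hint : ∀ t, Integrable (fun p => Ky p.1 p.2) ((μ t).prod (ν t))) :
    ∫ p, factorizedKernel Ky p.1 p.2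
        ∂((∑ t, h t • (μ t).map (·, t)).prod (∑ t, h t • (ν t).map (·, t))) =
      ∑ t, (h t : ℝ) ^ 2 * ∫ p, Ky p.1 p.2 ∂((μ t).prod (ν t)) := by
  simp_rw [Measure.prod_finsetSum, Measure.prod_smul_left, Measure.prod_smul_right, smul_smul]
  have hterm (s t : T) : Integrable (fun p => factorizedKernel Ky p.1 p.2)
      ((h s * h t) • ((μ s).map (·, s)).prod ((ν t).map (·, t))) :=
    (integrable_factorizedKernel_map_prodMk (by rintro rfl; exact hint s)).smul_measure_nnreal
  rw [integral_finsetSum_measure fun s _ => integrable_finsetSum_measure.2 fun t _ => hterm s t]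
  simp_rw [integral_finsetSum_measure fun t _ => hterm _ t, integral_smul_nnreal_measure,
    integral_factorizedKernel_map_prodMk]
  refine Finset.sum_congr rfl fun t _ => ?_
  simp_rw [smul_ite, smul_zero, Finset.sum_ite_eq, Finset.mem_univ, if_true, NNReal.smul_def,
    smul_eq_mul, NNReal.coe_mul, sq]

end FactorizedKernel

theorem mmd_factorized_kernel_decomposition_general
    {d : ℕ} {T : Type*} [Fintype T] [DecidableEq T] [MeasurableSpace T]
    [MeasurableSingletonClass T]
    (Ky : (Fin d → ℝ) → (Fin d → ℝ) → ℝ)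
    (h : T → ℝ≥0)
    (f g : T → Measure (Fin d → ℝ))
    [∀ t, IsProbabilityMeasure (f t)] [∀ t, IsProbabilityMeasure (g t)]
    (hff : ∀ t, Integrable (fun p => Ky p.1 p.2) ((f t).prod (f t)))
    (hfg : ∀ t, Integrable (fun p => Ky p.1 p.2) ((f t).prod (g t)))
    (hgg : ∀ t, Integrable (fun p => Ky p.1 p.2) ((g t).prod (g t))) :
    MMD2 (fun p q : (Fin d → ℝ) × T => Ky p.1 q.1 * (if p.2 = q.2 then (1 : ℝ) else 0))
        (∑ t, h t • (f t).map (fun y => (y, t)))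
        (∑ t, h t • (g t).map (fun y => (y, t)))
      = ∑ t, ((h t : ℝ)) ^ 2 * MMD2 Ky (f t) (g t) := by
  change MMD2 (factorizedKernel Ky) _ _ = _
  simp only [MMD2, integral_factorizedKernel_joint h f f hff,
    integral_factorizedKernel_joint h f g hfg, integral_factorizedKernel_joint h g g hgg,
    Finset.mul_sum, ← Finset.sum_sub_distrib, ← Finset.sum_add_distrib]
  exact Finset.sum_congr rfl fun t _ => by ring

/-- MMD decomposition for a time-factorized kernel: the squared MMD between joint
state–time distributions decomposes as a weighted sum of per-time squared MMDs. -/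
theorem mmd_factorized_kernel_decomposition
    {d : ℕ} {T : Type*} [Fintype T] [DecidableEq T] [MeasurableSpace T]
    [MeasurableSingletonClass T]
    (Ky : (Fin d → ℝ) → (Fin d → ℝ) → ℝ)
    (hKpd : IsPosDefKernel Ky)
    (hKmeas : Measurable (Function.uncurry Ky))
    (h : T → ℝ≥0) (hsum : ∑ t, h t = 1)
    (f g : T → Measure (Fin d → ℝ))
    [∀ t, IsProbabilityMeasure (f t)] [∀ t, IsProbabilityMeasure (g t)]
    (hff : ∀ t, Integrable (fun p => Ky p.1 p.2) ((f t).prod (f t)))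
    (hfg : ∀ t, Integrable (fun p => Ky p.1 p.2) ((f t).prod (g t)))
    (hgg : ∀ t, Integrable (fun p => Ky p.1 p.2) ((g t).prod (g t))) :
    MMD2 (fun p q : (Fin d → ℝ) × T => Ky p.1 q.1 * (if p.2 = q.2 then (1 : ℝ) else 0))
        (∑ t, h t • (f t).map (fun y => (y, t)))
        (∑ t, h t • (g t).map (fun y => (y, t)))
      = ∑ t, ((h t : ℝ)) ^ 2 * MMD2 Ky (f t) (g t) :=
  mmd_factorized_kernel_decomposition_general Ky h f g hff hfg hgg
end

section
/- Let $w_1,\dots,w_I > 0$ be weights and $\hat{p}_1,\dots,\hat{p}_I$ be probability measures on $\mathbb{R}^d$ embedded in an RKHS with positive definite kernel $K_y$ (with finite kernel expectations). Then the minimizer over probability measures $f$ of $\sum_{i=1}^I w_i\, \mathrm{MMD}_{K_y}^2(f, \hat p_i)$ is the weighted mixture $f^* = (\sum_i w_i)^{-1} \sum_{i=1}^I w_i\, \hat p_i$; that is, the MMD barycenter of a finite family of distributions with positive weights is their normalized weighted mixture. -/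
open MeasureTheory NNReal

/-!
Expanding the squares, `∑ᵢ wᵢ MMD²(f, pᵢ) = W · MMD²(f, m) + ∑ᵢ wᵢ MMD²(m, pᵢ)`, where `W = ∑ᵢ wᵢ`
and `m` is the normalized mixture: this only uses that `∫∫ K d(f ⊗ ·)` is linear in the second
measure and that `∑ⱼ wⱼ pⱼ = W m`. So it suffices that `MMD²(f, m) ≥ 0`.

Nonnegativity of `MMD²(μ, ν)` is derived from the finite positive definiteness of `K` by sampling.
Applied to `n` points `zⱼ = (xⱼ, yⱼ)` with coefficients `±1`, positive definiteness says that the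
kernel `h(z, z') = K(x, x') - K(x, y') - K(y, x') + K(y, y')` has nonnegative double sums
`∑ⱼₖ h(zⱼ, zₖ)`. Taking the `zⱼ` i.i.d. with law `μ ⊗ ν` and integrating, the `n` diagonal terms
contribute `O(n)` while the `n² - n` off-diagonal ones each contribute `MMD²(μ, ν)`; letting
`n → ∞` gives `MMD²(μ, ν) ≥ 0`.
-/

open ProbabilityTheory

theorem MeasureTheory.MeasurePreserving.integral_comp_of_aestronglyMeasurable {α δ E : Type*}
    [MeasurableSpace α] [MeasurableSpace δ] [NormedAddCommGroup E] [NormedSpace ℝ E]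
    {μ : Measure α} {ν : Measure δ} {f : α → δ} (hf : MeasurePreserving f μ ν) {g : δ → E}
    (hg : AEStronglyMeasurable g ν) :
    ∫ x, g (f x) ∂μ = ∫ y, g y ∂ν := by
  rw [← hf.map_eq] at hg ⊢
  exact (integral_map hf.measurable.aemeasurable hg).symm

theorem Finset.sum_sum_ite_eq {ι R : Type*} [Fintype ι] [DecidableEq ι] [CommRing R] (a b : R) :
    ∑ i : ι, ∑ j : ι, (if i = j then a else b)
      = Fintype.card ι * a + (Fintype.card ι ^ 2 - Fintype.card ι) * b := by
  have hsplit : ∀ i j : ι, (if i = j then a else b) = b + if i = j then a - b else 0 := by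
    intro i j
    split_ifs <;> ring
  simp only [hsplit, Finset.sum_add_distrib, Finset.sum_ite_eq, Finset.mem_univ, if_true,
    Finset.sum_const, Finset.card_univ, nsmul_eq_mul]
  ring

theorem integrable_uncurry_of_abs_le {β : Type*} [MeasurableSpace β] {h : β → β → ℝ}
    (hm : Measurable (Function.uncurry h)) {B : ℝ} (hB : ∀ x y, |h x y| ≤ B)
    (m : Measure (β × β)) [IsFiniteMeasure m] :
    Integrable (Function.uncurry h) m :=
  .of_bound hm.aestronglyMeasurable B (ae_of_all _ fun z => hB z.1 z.2)

section Sampling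

variable {β : Type*} [MeasurableSpace β] (ρ : Measure β) [IsProbabilityMeasure ρ]

theorem measurePreserving_pi_apply_pair {n : ℕ} {j k : Fin n} (hjk : j ≠ k) :
    MeasurePreserving (fun ω => (ω j, ω k)) (Measure.pi fun _ : Fin n => ρ) (ρ.prod ρ) := by
  refine ⟨(measurable_pi_apply j).prodMk (measurable_pi_apply k), ?_⟩
  have hindep : iIndepFun (fun i (ω : Fin n → β) => ω i) (Measure.pi fun _ => ρ) :=
    iIndepFun_pi (X := fun _ => id) fun _ => aemeasurable_id
  rw [(indepFun_iff_map_prod_eq_prod_map_map (measurable_pi_apply j).aemeasurable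
      (measurable_pi_apply k).aemeasurable).1 (hindep.indepFun hjk),
    (measurePreserving_eval (fun _ => ρ) j).map_eq, (measurePreserving_eval (fun _ => ρ) k).map_eq]

variable {h : β → β → ℝ} (hint : Integrable (Function.uncurry h) (ρ.prod ρ))
  (hdiag : Integrable (fun x => h x x) ρ)
include hint hdiag

theorem integrable_pi_apply_apply {n : ℕ} (j k : Fin n) :
    Integrable (fun ω => h (ω j) (ω k)) (Measure.pi fun _ => ρ) := by
  rcases eq_or_ne j k with rfl | hjk
  · exact (measurePreserving_eval (fun _ => ρ) j).integrable_comp_of_integrable hdiag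
  · exact (measurePreserving_pi_apply_pair ρ hjk).integrable_comp_of_integrable hint

theorem integral_pi_apply_apply {n : ℕ} (j k : Fin n) :
    ∫ ω, h (ω j) (ω k) ∂(Measure.pi fun _ => ρ)
      = if j = k then ∫ x, h x x ∂ρ else ∫ z, h z.1 z.2 ∂(ρ.prod ρ) := by
  split_ifs with hjk
  · subst hjk
    exact (measurePreserving_eval (fun _ => ρ) j).integral_comp_of_aestronglyMeasurable
      hdiag.aestronglyMeasurable
  · exact (measurePreserving_pi_apply_pair ρ hjk).integral_comp_of_aestronglyMeasurable
      hint.aestronglyMeasurable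

theorem integral_sum_sum_pi (n : ℕ) :
    ∫ ω, ∑ j, ∑ k, h (ω j) (ω k) ∂(Measure.pi fun _ : Fin n => ρ)
      = n * ∫ x, h x x ∂ρ + (n ^ 2 - n) * ∫ z, h z.1 z.2 ∂(ρ.prod ρ) := by
  have hint' := integrable_pi_apply_apply ρ hint hdiag (n := n)
  rw [integral_finsetSum _ fun j _ => integrable_finsetSum _ fun k _ => hint' j k]
  simp_rw [integral_finsetSum _ fun k _ => hint' _ k, integral_pi_apply_apply ρ hint hdiag]
  rw [Finset.sum_sum_ite_eq, Fintype.card_fin]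

theorem integral_prod_nonneg_of_sum_sum_nonneg
    (hsum : ∀ (n : ℕ) (x : Fin n → β), 0 ≤ ∑ j, ∑ k, h (x j) (x k)) :
    0 ≤ ∫ z, h z.1 z.2 ∂(ρ.prod ρ) := by
  set D := ∫ x, h x x ∂ρ
  set E := ∫ z, h z.1 z.2 ∂(ρ.prod ρ)
  by_contra! hE
  obtain ⟨n, hn⟩ := exists_nat_gt ((D - E) / -E)
  rw [div_lt_iff₀ (neg_pos.2 hE)] at hn
  have hpos : 0 ≤ ∫ ω, ∑ j, ∑ k, h (ω j) (ω k) ∂(Measure.pi fun _ : Fin (n + 1) => ρ) :=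
    integral_nonneg fun ω => hsum (n + 1) ω
  rw [integral_sum_sum_pi ρ hint hdiag] at hpos
  push_cast at hpos
  nlinarith

end Sampling

section PairDiffKernel

variable {γ : Type*} {K : γ → γ → ℝ}

/-- The kernel of the feature differences `φ z.1 - φ z.2`, if `K x y = ⟪φ x, φ y⟫`. -/
def pairDiffKernel (K : γ → γ → ℝ) (z z' : γ × γ) : ℝ :=
  K z.1 z'.1 - K z.1 z'.2 - K z.2 z'.1 + K z.2 z'.2

theorem IsPosDefKernel.sum_sum_pairDiffKernel_nonneg (hK : IsPosDefKernel K) (n : ℕ)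
    (z : Fin n → γ × γ) : 0 ≤ ∑ j, ∑ k, pairDiffKernel K (z j) (z k) := by
  have h := hK.2 (n + n) (Fin.append (fun j => (z j).1) (fun j => (z j).2))
    (Fin.append (fun _ => 1) (fun _ => -1))
  simp only [Fin.sum_univ_add, Fin.append_left, Fin.append_right, one_mul, mul_one,
    neg_mul, mul_neg, Finset.sum_neg_distrib, Finset.sum_add_distrib] at h
  simp only [pairDiffKernel, Finset.sum_add_distrib, Finset.sum_sub_distrib]
  linarith

theorem abs_pairDiffKernel_le {B : ℝ} (hB : ∀ x y, |K x y| ≤ B) (z z' : γ × γ) :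
    |pairDiffKernel K z z'| ≤ 4 * B := by
  unfold pairDiffKernel
  have := abs_le.1 (hB z.1 z'.1); have := abs_le.1 (hB z.1 z'.2)
  have := abs_le.1 (hB z.2 z'.1); have := abs_le.1 (hB z.2 z'.2)
  exact abs_le.2 ⟨by linarith, by linarith⟩

variable [MeasurableSpace γ]

theorem measurable_pairDiffKernel (hKm : Measurable (Function.uncurry K)) :
    Measurable (Function.uncurry (pairDiffKernel K)) := by
  have hcomp : ∀ {f g : (γ × γ) × (γ × γ) → γ}, Measurable f → Measurable g →
      Measurable fun q => K (f q) (g q) := fun hf hg => hKm.comp (hf.prodMk hg)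
  unfold pairDiffKernel Function.uncurry
  fun_prop

end PairDiffKernel

section Marginals

variable {β γ : Type*} [MeasurableSpace β] [MeasurableSpace γ] {K : γ → γ → ℝ}
  {ρ ρ' : Measure β} [SFinite ρ] [SFinite ρ'] {a b : Measure γ} {f g : β → γ}

theorem integrable_kernel_prodMap (hf : MeasurePreserving f ρ a) (hg : MeasurePreserving g ρ' b)
    (hK : Integrable (Function.uncurry K) (a.prod b)) :
    Integrable (fun q => K (f q.1) (g q.2)) (ρ.prod ρ') :=
  (hf.prod hg).integrable_comp_of_integrable hK

theorem integral_kernel_prodMap (hf : MeasurePreserving f ρ a) (hg : MeasurePreserving g ρ' b)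
    (hK : AEStronglyMeasurable (Function.uncurry K) (a.prod b)) :
    ∫ q, K (f q.1) (g q.2) ∂(ρ.prod ρ') = ∫ z, K z.1 z.2 ∂(a.prod b) :=
  (hf.prod hg).integral_comp_of_aestronglyMeasurable hK

end Marginals

section MMD

variable {γ : Type*} [MeasurableSpace γ] {K : γ → γ → ℝ}

theorem integral_prod_swap_of_symm (hK : ∀ x y, K x y = K y x) (μ ν : Measure γ)
    [SFinite μ] [SFinite ν] :
    ∫ z, K z.1 z.2 ∂(ν.prod μ) = ∫ z, K z.1 z.2 ∂(μ.prod ν) := by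
  simp_rw [← integral_prod_swap (fun z : γ × γ => K z.1 z.2) (μ := ν), Prod.fst_swap,
    Prod.snd_swap, hK]

theorem integral_pairDiffKernel (hsymm : ∀ x y, K x y = K y x)
    (hKm : Measurable (Function.uncurry K)) {B : ℝ} (hB : ∀ x y, |K x y| ≤ B)
    (μ ν : Measure γ) [IsProbabilityMeasure μ] [IsProbabilityMeasure ν] :
    ∫ q, pairDiffKernel K q.1 q.2 ∂((μ.prod ν).prod (μ.prod ν)) = MMD2 K μ ν := by
  have hint := integrable_uncurry_of_abs_le hKm hB
  have hfst : MeasurePreserving Prod.fst (μ.prod ν) μ := measurePreserving_fst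
  have hsnd : MeasurePreserving Prod.snd (μ.prod ν) ν := measurePreserving_snd
  have i11 := integrable_kernel_prodMap hfst hfst (hint (μ.prod μ))
  have i12 := integrable_kernel_prodMap hfst hsnd (hint (μ.prod ν))
  have i21 := integrable_kernel_prodMap hsnd hfst (hint (ν.prod μ))
  have i22 := integrable_kernel_prodMap hsnd hsnd (hint (ν.prod ν))
  unfold pairDiffKernel MMD2
  rw [integral_add (by exact (i11.sub i12).sub i21) i22, integral_sub (by exact i11.sub i12) i21,
    integral_sub i11 i12, integral_kernel_prodMap hfst hfst hKm.aestronglyMeasurable,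
    integral_kernel_prodMap hfst hsnd hKm.aestronglyMeasurable,
    integral_kernel_prodMap hsnd hfst hKm.aestronglyMeasurable,
    integral_kernel_prodMap hsnd hsnd hKm.aestronglyMeasurable,
    integral_prod_swap_of_symm hsymm μ ν]
  ring

theorem MMD2_nonneg (hK : IsPosDefKernel K) (hKm : Measurable (Function.uncurry K)) {B : ℝ}
    (hB : ∀ x y, |K x y| ≤ B) (μ ν : Measure γ) [IsProbabilityMeasure μ]
    [IsProbabilityMeasure ν] : 0 ≤ MMD2 K μ ν := by
  have hm := measurable_pairDiffKernel hKm
  rw [← integral_pairDiffKernel hK.1 hKm hB]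
  refine integral_prod_nonneg_of_sum_sum_nonneg (μ.prod ν)
    (integrable_uncurry_of_abs_le hm (abs_pairDiffKernel_le hB) _) ?_
    hK.sum_sum_pairDiffKernel_nonneg
  exact .of_bound (hm.comp (measurable_id.prodMk measurable_id)).aestronglyMeasurable (4 * B)
    (ae_of_all _ fun z => abs_pairDiffKernel_le hB z z)

end MMD

section Mixture

variable {α ι : Type*} [MeasurableSpace α] [Fintype ι] (w : ι → ℝ≥0) (p : ι → Measure α)

noncomputable def weightedMixture : Measure α := (∑ j, w j)⁻¹ • ∑ j, w j • p j

instance isFiniteMeasure_weightedMixture [∀ i, IsFiniteMeasure (p i)] :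
    IsFiniteMeasure (weightedMixture w p) := by
  unfold weightedMixture
  infer_instance

theorem isProbabilityMeasure_weightedMixture [∀ i, IsProbabilityMeasure (p i)]
    (hw : ∑ j, w j ≠ 0) : IsProbabilityMeasure (weightedMixture w p) := by
  constructor
  simp only [weightedMixture, Measure.smul_apply, Measure.finsetSum_apply, measure_univ,
    ENNReal.smul_def, smul_eq_mul, mul_one, ← ENNReal.ofNNReal_finsetSum, ← ENNReal.coe_mul,
    inv_mul_cancel₀ hw, ENNReal.coe_one]

theorem smul_prod_weightedMixture {β : Type*} [MeasurableSpace β] (x : Measure β)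
    [∀ i, SFinite (p i)] :
    (∑ j, w j) • x.prod (weightedMixture w p) = ∑ j, w j • x.prod (p j) := by
  rw [weightedMixture, ← Measure.sum_fintype, Measure.prod_smul_right, Measure.prod_sum_right]
  simp_rw [Measure.prod_smul_right]
  rw [Measure.sum_fintype, smul_smul]
  by_cases hw : ∑ j, w j = 0
  · simp [Finset.sum_eq_zero_iff.1 hw]
  · rw [mul_inv_cancel₀ hw, one_smul]

theorem mul_integral_prod_weightedMixture {β : Type*} [MeasurableSpace β] (x : Measure β)
    [∀ i, SFinite (p i)] {F : β × α → ℝ} (hF : ∀ j, Integrable F (x.prod (p j))) :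
    (∑ j, w j : ℝ) * ∫ z, F z ∂(x.prod (weightedMixture w p))
      = ∑ j, (w j : ℝ) * ∫ z, F z ∂(x.prod (p j)) := by
  have := congrArg (fun m => ∫ z, F z ∂m) (smul_prod_weightedMixture w p x)
  simpa only [integral_smul_nnreal_measure,
    integral_finsetSum_measure fun j _ => (hF j).smul_measure_nnreal, NNReal.smul_def,
    smul_eq_mul, NNReal.coe_sum] using this

theorem sum_mul_MMD2_eq {K : α → α → ℝ} (hKm : Measurable (Function.uncurry K)) {B : ℝ}
    (hB : ∀ x y, |K x y| ≤ B) (f : Measure α) [IsFiniteMeasure f] [∀ i, IsFiniteMeasure (p i)] :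
    ∑ i, (w i : ℝ) * MMD2 K f (p i)
      = (∑ j, w j : ℝ) * MMD2 K f (weightedMixture w p)
        + ∑ i, (w i : ℝ) * MMD2 K (weightedMixture w p) (p i) := by
  have hint := integrable_uncurry_of_abs_le hKm hB
  have hf := mul_integral_prod_weightedMixture w p f (F := fun z => K z.1 z.2)
    fun j => hint (f.prod (p j))
  have hm := mul_integral_prod_weightedMixture w p (weightedMixture w p) (F := fun z => K z.1 z.2)
    fun j => hint ((weightedMixture w p).prod (p j))
  simp only [MMD2, mul_add, mul_sub, Finset.sum_add_distrib, Finset.sum_sub_distrib,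
    ← Finset.sum_mul, mul_left_comm _ (2 : ℝ), ← Finset.mul_sum]
  linear_combination 2 * hf - 2 * hm

end Mixture

theorem mmd_barycenter_is_weighted_mixture_general
    {d I : ℕ}
    (Ky : (Fin d → ℝ) → (Fin d → ℝ) → ℝ)
    (hKpd : IsPosDefKernel Ky)
    (hKmeas : Measurable (Function.uncurry Ky))
    (B : ℝ) (hB : ∀ x y, |Ky x y| ≤ B)
    (w : Fin I → ℝ≥0)
    (p : Fin I → Measure (Fin d → ℝ)) [∀ i, IsProbabilityMeasure (p i)]
    (f : Measure (Fin d → ℝ)) [IsProbabilityMeasure f] :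
    ∑ i, (w i : ℝ) * MMD2 Ky ((∑ j, w j)⁻¹ • ∑ j, w j • p j) (p i)
      ≤ ∑ i, (w i : ℝ) * MMD2 Ky f (p i) := by
  have hdist : 0 ≤ (∑ j, w j : ℝ) * MMD2 Ky f (weightedMixture w p) := by
    rcases eq_or_ne (∑ j, w j) 0 with hW | hW
    · simp [← NNReal.coe_sum, hW]
    · have := isProbabilityMeasure_weightedMixture w p hW
      exact mul_nonneg (by positivity) (MMD2_nonneg hKpd hKmeas hB f _)
  exact (le_add_of_nonneg_left hdist).trans_eq (sum_mul_MMD2_eq w p hKmeas hB f).symm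

/-- The MMD barycenter of a finite family of probability measures with positive weights
is their normalized weighted mixture: the mixture minimizes the weighted sum of squared
MMDs to the given measures over all probability measures. -/
theorem mmd_barycenter_is_weighted_mixture
    {d I : ℕ} (hI : 0 < I)
    (Ky : (Fin d → ℝ) → (Fin d → ℝ) → ℝ)
    (hKpd : IsPosDefKernel Ky)
    (hKmeas : Measurable (Function.uncurry Ky))
    (B : ℝ) (hB : ∀ x y, |Ky x y| ≤ B)
    (w : Fin I → ℝ≥0) (hw : ∀ i, 0 < w i)
    (p : Fin I → Measure (Fin d → ℝ)) [∀ i, IsProbabilityMeasure (p i)]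
    (f : Measure (Fin d → ℝ)) [IsProbabilityMeasure f] :
    ∑ i, (w i : ℝ) * MMD2 Ky ((∑ j, w j)⁻¹ • ∑ j, w j • p j) (p i)
      ≤ ∑ i, (w i : ℝ) * MMD2 Ky f (p i) :=
  mmd_barycenter_is_weighted_mixture_general Ky hKpd hKmeas B hB w p f
end
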